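/- Let ρ : sl(2) → Diff(ℂ((z))) be given by ρ(L_i) = h^i ∘ (L + i c) for i = −1, 0, 1, where L = ρ(L_0) = −(h/h′)∂ + b, h,b ∈ ℂ((z)), h′ ≠ 0, c ∈ ℂ. Then in the universal enveloping algebra picture, ρ(L_1^α L_0^β L_{−1}^γ) = h^{α−γ} · P(L + c − α + γ + 1, α) · (L + γ)^β · P(L − c, γ) for all nonnegative integers α, β, γ, where P is the Pochhammer symbol P(f,n) = f(f+1)···(f+n−1). -/

import Mathlib

set_option synthInstance.maxHeartbeats 1000000
set_option maxHeartbeats 1000000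

noncomputable section

/-- The derivative `∂ = d/dz` on `ℂ((z))`, as a `ℂ`-linear endomorphism. -/
def Dz : Module.End ℂ (LaurentSeries ℂ) := LaurentSeries.derivative ℂ

/-- Multiplication by a Laurent series `g`, as a `ℂ`-linear endomorphism of `ℂ((z))`. -/
def mz (g : LaurentSeries ℂ) : Module.End ℂ (LaurentSeries ℂ) where
  toFun f := g * f
  map_add' := mul_add g
  map_smul' c f := by
    show g * (c • f) = c • (g * f)
    rw [← HahnSeries.single_zero_mul_eq_smul, ← HahnSeries.single_zero_mul_eq_smul, mul_left_comm]

/-- `P` is a differential operator on `ℂ((z))` of order `≤ k`: `P = Σ_{j=0}^{k} ξ_j ∂^j`. -/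
def DiffOrderLE (P : Module.End ℂ (LaurentSeries ℂ)) (k : ℕ) : Prop :=
  ∃ ξ : ℕ → LaurentSeries ℂ, P = ∑ j ∈ Finset.range (k + 1), mz (ξ j) * Dz ^ j

/-- `P` is a differential operator on `ℂ((z))` of order `< k` (for `k = 0` this means `P = 0`). -/
def DiffOrderLT (P : Module.End ℂ (LaurentSeries ℂ)) (k : ℕ) : Prop :=
  ∃ ξ : ℕ → LaurentSeries ℂ, P = ∑ j ∈ Finset.range k, mz (ξ j) * Dz ^ j

/-- `P` is a differential operator on `ℂ((z))` of order exactly `k`. -/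
def HasOrder (P : Module.End ℂ (LaurentSeries ℂ)) (k : ℕ) : Prop :=
  DiffOrderLE P k ∧ ¬ DiffOrderLT P k

/-- The Pochhammer product `P(A, n) = A (A+1) ⋯ (A+n−1)` in the ring of endomorphisms. -/
def pochEnd (A : Module.End ℂ (LaurentSeries ℂ)) (n : ℕ) : Module.End ℂ (LaurentSeries ℂ) :=
  ((List.range n).map fun k => A + (k : ℂ) • 1).prod

/-
Multiplication by `h` shifts `L = −(h/h′)∂ + b` by one: the Leibniz rule gives
`L ∘ h = h ∘ (L − 1)` and `L ∘ h⁻¹ = h⁻¹ ∘ (L + 1)`, so any polynomial in `L` moves past `h^{∓k}`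
at the cost of replacing `L` by `L ± k`. Pulling every factor `h` of `(h (L + c))^α` to the left
leaves the falling product `(L + c)(L + c − 1)⋯(L + c − α + 1) = P(L + c − α + 1, α)`, pulling every
`h⁻¹` of `(h⁻¹ (L − c))^γ` to the left leaves the rising product `P(L − c, γ)`, and moving `h^{−γ}`
past `P(L + c − α + 1, α) L^β` shifts `L` to `L + γ` there.
-/

open Polynomial

section Semiring

variable {R A : Type*} [CommSemiring R] [Semiring A] [Algebra R A]

theorem aeval_mul_eq_mul_aeval_of_mul_eq {L L' M : A} (h : L * M = M * L') (p : R[X]) :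
    aeval L p * M = M * aeval L' p := by
  induction p using Polynomial.induction_on' with
  | add p q hp hq => rw [map_add, map_add, add_mul, mul_add, hp, hq]
  | monomial n r =>
    rw [aeval_monomial, aeval_monomial, mul_assoc, ← (SemiconjBy.pow_right h.symm n).eq,
      ← mul_assoc, Algebra.commutes, mul_assoc]

theorem add_smul_one_mul_eq_of_mul_eq {L L' M : A} (h : L * M = M * L') (r : R) :
    (L + r • 1) * M = M * (L' + r • 1) := by
  rw [add_mul, mul_add, h, smul_one_mul, mul_smul_one]

theorem mul_pow_eq_pow_mul_add_nsmul {Y M δ : A} (hδ : Commute M δ) (h : Y * M = M * (Y + δ))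
    (n : ℕ) : Y * M ^ n = M ^ n * (Y + n • δ) := by
  induction n with
  | zero => simp
  | succ n ih =>
    rw [pow_succ, ← mul_assoc, ih, mul_assoc, add_mul, h, smul_mul_assoc, ← hδ.eq, ← mul_smul_comm,
      ← mul_add, ← mul_assoc, ← pow_succ, succ_nsmul]
    abel_nf

theorem mul_pow_eq_pow_mul_aeval_ascPochhammer {Y M : A} (h : Y * M = M * (Y + 1)) (n : ℕ) :
    (M * Y) ^ n = M ^ n * aeval Y (ascPochhammer R n) := by
  induction n with
  | zero => simp
  | succ n ih =>
    rw [pow_succ', ih, mul_assoc, ← mul_assoc Y,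
      mul_pow_eq_pow_mul_add_nsmul (Commute.one_right M) h, ascPochhammer_succ_right, mul_comm,
      map_mul]
    simp [pow_succ', mul_assoc]

end Semiring

section Ring

variable {R A : Type*} [CommRing R] [Ring A] [Algebra R A]

theorem mul_pow_eq_pow_mul_aeval_descPochhammer {Y M : A} (h : Y * M = M * (Y - 1)) (n : ℕ) :
    (M * Y) ^ n = M ^ n * aeval Y (descPochhammer R n) := by
  rw [sub_eq_add_neg] at h
  induction n with
  | zero => simp
  | succ n ih =>
    rw [pow_succ', ih, mul_assoc, ← mul_assoc Y,
      mul_pow_eq_pow_mul_add_nsmul (Commute.neg_one_right M) h, descPochhammer_succ_right,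
      mul_comm, map_mul]
    simp [pow_succ', sub_eq_add_neg, mul_assoc]

theorem aeval_descPochhammer_eq_aeval_ascPochhammer (Y : A) (n : ℕ) :
    aeval Y (descPochhammer R n) = aeval (Y - n + 1) (ascPochhammer R n) := by
  have h := congrArg (Polynomial.map (Int.castRingHom R)) (descPochhammer_eq_ascPochhammer n)
  simp only [descPochhammer_map, map_comp, ascPochhammer_map] at h
  rw [h, aeval_comp]
  simp

end Ring

lemma coeff_Dz (f : LaurentSeries ℂ) (n : ℤ) : (Dz f).coeff n = (n + 1) • f.coeff (n + 1) := by
  rw [Dz, LaurentSeries.derivative_apply, LaurentSeries.hasseDeriv_coeff]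
  norm_num [Ring.choose_one_right]

lemma coeff_single_one_mul_Dz (f : LaurentSeries ℂ) (n : ℤ) :
    (HahnSeries.single 1 1 * Dz f).coeff n = n • f.coeff n := by
  rw [HahnSeries.coeff_single_mul, one_mul, coeff_Dz, sub_add_cancel]

lemma support_single_one_mul_Dz_subset (f : LaurentSeries ℂ) :
    (HahnSeries.single 1 1 * Dz f).support ⊆ f.support := fun n hn hf =>
  hn (by rw [coeff_single_one_mul_Dz, hf, smul_zero])

/-- `z ∂` acts on coefficients by `fₙ ↦ n fₙ`, so its Leibniz rule needs no reindexing. -/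
lemma single_one_mul_Dz_mul (f g : LaurentSeries ℂ) :
    HahnSeries.single 1 1 * Dz (f * g) =
      HahnSeries.single 1 1 * Dz f * g + f * (HahnSeries.single 1 1 * Dz g) := by
  ext n
  rw [HahnSeries.coeff_add, coeff_single_one_mul_Dz, HahnSeries.coeff_mul,
    HahnSeries.coeff_mul_left' f.isPWO_support (support_single_one_mul_Dz_subset f),
    HahnSeries.coeff_mul_right' g.isPWO_support (support_single_one_mul_Dz_subset g),
    Finset.smul_sum, ← Finset.sum_add_distrib]
  refine Finset.sum_congr rfl fun ij hij => ?_
  rw [coeff_single_one_mul_Dz, coeff_single_one_mul_Dz, smul_mul_assoc, mul_smul_comm, ← add_smul,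
    (Finset.mem_antidiagonal.mp hij).2.2]

lemma Dz_mul (f g : LaurentSeries ℂ) : Dz (f * g) = Dz f * g + f * Dz g := by
  refine mul_left_cancel₀ (HahnSeries.single_ne_zero one_ne_zero :
    HahnSeries.single (1 : ℤ) (1 : ℂ) ≠ 0) ?_
  rw [single_one_mul_Dz_mul]
  ring

lemma ne_zero_of_Dz_ne_zero {h : LaurentSeries ℂ} (hder : Dz h ≠ 0) : h ≠ 0 := by
  rintro rfl
  exact hder (map_zero Dz)

lemma mz_apply (g f : LaurentSeries ℂ) : mz g f = g * f := rfl

lemma mz_one : mz 1 = 1 := LinearMap.ext (one_mul ·)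

lemma mz_mul (g g' : LaurentSeries ℂ) : mz (g * g') = mz g * mz g' :=
  LinearMap.ext (mul_assoc g g' ·)

lemma mz_neg (g : LaurentSeries ℂ) : mz (-g) = -mz g := LinearMap.ext (neg_mul g ·)

lemma mz_pow (g : LaurentSeries ℂ) (n : ℕ) : mz (g ^ n) = mz g ^ n := by
  induction n with
  | zero => rw [pow_zero, pow_zero, mz_one]
  | succ n ih => rw [pow_succ, pow_succ, mz_mul, ih]

lemma pochEnd_eq_aeval (A : Module.End ℂ (LaurentSeries ℂ)) (n : ℕ) :
    pochEnd A n = aeval A (ascPochhammer ℂ n) := by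
  induction n with
  | zero => simp [pochEnd]
  | succ n ih =>
    rw [ascPochhammer_succ_right, map_mul, ← ih]
    simp [pochEnd, List.range_succ, Nat.cast_smul_eq_nsmul]

/- The `(M := _)` arguments below fix the ring `A` of the general lemmas before unification: the
ring structure of `Module.End ℂ (LaurentSeries ℂ)` cannot be recovered from a metavariable. -/
lemma pochEnd_mul_eq_mul_pochEnd {L M : Module.End ℂ (LaurentSeries ℂ)} {δ : ℂ}
    (hM : L * M = M * (L + δ • 1)) (e : ℂ) (n : ℕ) :
    pochEnd (L + e • 1) n * M = M * pochEnd (L + (e + δ) • 1) n := by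
  rw [pochEnd_eq_aeval, pochEnd_eq_aeval,
    aeval_mul_eq_mul_aeval_of_mul_eq (M := M) (add_smul_one_mul_eq_of_mul_eq (M := M) hM e)]
  exact congrArg (fun Y => M * aeval Y (ascPochhammer ℂ n)) (by module)

section Realization

variable {h b : LaurentSeries ℂ} {L : Module.End ℂ (LaurentSeries ℂ)}

lemma mul_mz_eq_mz_mul_sub (hL : L = mz (-(h / Dz h)) * Dz + mz b) (g : LaurentSeries ℂ) :
    L * mz g = mz g * L - mz (h / Dz h * Dz g) := by
  ext f : 1
  simp only [hL, Module.End.mul_apply, LinearMap.add_apply, LinearMap.sub_apply, mz_apply, Dz_mul]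
  ring

lemma mul_mz_self_eq (hder : Dz h ≠ 0) (hL : L = mz (-(h / Dz h)) * Dz + mz b) :
    L * mz h = mz h * (L - 1) := by
  rw [mul_mz_eq_mz_mul_sub hL, div_mul_cancel₀ h hder]
  exact (mul_sub_one (mz h) L).symm

lemma mul_mz_inv_eq (hder : Dz h ≠ 0) (hL : L = mz (-(h / Dz h)) * Dz + mz b) :
    L * mz h⁻¹ = mz h⁻¹ * (L + 1) := by
  have hDz_one : Dz 1 = 0 := by simpa using Dz_mul 1 1
  have hDz_inv : h * Dz h⁻¹ = -(Dz h * h⁻¹) := by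
    rw [eq_neg_iff_add_eq_zero, add_comm, ← Dz_mul, mul_inv_cancel₀ (ne_zero_of_Dz_ne_zero hder),
      hDz_one]
  have hcomm : h / Dz h * Dz h⁻¹ = -h⁻¹ := by
    rw [div_mul_eq_mul_div, hDz_inv]
    field_simp
  rw [mul_mz_eq_mz_mul_sub hL, hcomm, mz_neg, mul_add, mul_one]
  abel

variable (hder : Dz h ≠ 0) (hL : L = mz (-(h / Dz h)) * Dz + mz b)
include hder hL

lemma mul_mz_inv_pow_eq (n : ℕ) : L * mz (h⁻¹ ^ n) = mz (h⁻¹ ^ n) * (L + (n : ℂ) • 1) := by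
  rw [mz_pow, mul_pow_eq_pow_mul_add_nsmul (M := mz h⁻¹) (δ := 1) (Commute.one_right _)
    (mul_mz_inv_eq hder hL), Nat.cast_smul_eq_nsmul]

lemma mz_mul_add_smul_one_pow (c : ℂ) (n : ℕ) :
    (mz h * (L + c • 1)) ^ n = mz (h ^ n) * pochEnd (L + (c - n + 1) • 1) n := by
  have hshift : (L + c • 1) * mz h = mz h * (L + c • 1 - 1) := by
    convert add_smul_one_mul_eq_of_mul_eq (M := mz h) (mul_mz_self_eq hder hL) c using 2
    abel
  rw [mul_pow_eq_pow_mul_aeval_descPochhammer (R := ℂ) (M := mz h) hshift,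
    aeval_descPochhammer_eq_aeval_ascPochhammer (R := ℂ) (L + c • 1) n, pochEnd_eq_aeval, mz_pow]
  refine congrArg (fun Y => mz h ^ n * aeval Y (ascPochhammer ℂ n)) ?_
  rw [← nsmul_one, ← Nat.cast_smul_eq_nsmul ℂ]
  module

lemma mz_inv_mul_sub_smul_one_pow (c : ℂ) (n : ℕ) :
    (mz h⁻¹ * (L - c • 1)) ^ n = mz (h⁻¹ ^ n) * pochEnd (L - c • 1) n := by
  have hshift : (L - c • 1) * mz h⁻¹ = mz h⁻¹ * (L - c • 1 + 1) := by
    convert add_smul_one_mul_eq_of_mul_eq (M := mz h⁻¹) (mul_mz_inv_eq hder hL) (-c) using 2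
      <;> module
  rw [mul_pow_eq_pow_mul_aeval_ascPochhammer (R := ℂ) (M := mz h⁻¹) hshift, pochEnd_eq_aeval,
    mz_pow]

end Realization

/-- Let `ρ(L i) = h^i ∘ (L + i c)` for `i = −1, 0, 1`, where `L = ρ(L₀) = −(h/h′)∂ + b`.  Then
`ρ(L₁)^α ρ(L₀)^β ρ(L₋₁)^γ = h^{α−γ} · P(L + c − α + γ + 1, α) · (L + γ)^β · P(L − c, γ)` for all
nonnegative integers `α, β, γ`, where `P` is the Pochhammer symbol. -/
theorem enveloping_algebra_pbw_image
    (h b : LaurentSeries ℂ) (c : ℂ) (hder : Dz h ≠ 0)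
    (L : Module.End ℂ (LaurentSeries ℂ))
    (hL : L = mz (-(h / Dz h)) * Dz + mz b) :
    ∀ α β γ : ℕ,
      (mz h * (L + c • 1)) ^ α * L ^ β * (mz h⁻¹ * (L - c • 1)) ^ γ =
        mz (h ^ ((α : ℤ) - (γ : ℤ))) *
          pochEnd (L + (c - (α : ℂ) + (γ : ℂ) + 1) • 1) α *
          (L + (γ : ℂ) • 1) ^ β *
          pochEnd (L - c • 1) γ := by
  intro α β γ
  have hshift := mul_mz_inv_pow_eq hder hL γ
  have hpow : L ^ β * mz (h⁻¹ ^ γ) = mz (h⁻¹ ^ γ) * (L + (γ : ℂ) • 1) ^ β :=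
    (SemiconjBy.pow_right (a := mz (h⁻¹ ^ γ)) hshift.symm β).eq.symm
  have hzpow : h ^ ((α : ℤ) - γ) = h ^ α * h⁻¹ ^ γ := by
    rw [zpow_sub₀ (ne_zero_of_Dz_ne_zero hder), zpow_natCast, zpow_natCast, div_eq_mul_inv, inv_pow]
  calc
    _ = mz (h ^ α) * (pochEnd (L + (c - α + 1) • 1) α * (L ^ β * mz (h⁻¹ ^ γ))) *
        pochEnd (L - c • 1) γ := by
      rw [mz_mul_add_smul_one_pow hder hL, mz_inv_mul_sub_smul_one_pow hder hL]
      simp only [mul_assoc]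
    _ = _ := by
      rw [hpow, ← mul_assoc (pochEnd _ α), pochEnd_mul_eq_mul_pochEnd hshift, hzpow, mz_mul,
        show c - α + 1 + γ = c - α + γ + 1 by ring]
      simp only [mul_assoc]
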